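/- Characterisation of CBN and CBV normal forms: for every term t of the λ-calculus with explicit substitutions, (1) t ∈ no_n if and only if t ↛n (no CBN step applies to t), and (2) t ∈ no_v if and only if t ↛v (no CBV step applies to t). -/
import Mathlib


/-! # The Bang Calculus Revisited: common definitions.

Terms are represented with de Bruijn indices, so that all the meta-level
substitutions are capture-avoiding by construction. -/

/-- Terms of the λ!-calculus.  `esub t u` is the explicit substitution
`t[0\u]`: the (anonymous) binder scopes over `t`, not over `u`. -/
inductive Tm : Type
  | var : ℕ → Tm
  | app : Tm → Tm → Tm
  | lam : Tm → Tm
  | bang : Tm → Tm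
  | der : Tm → Tm
  | esub : Tm → Tm → Tm
  deriving DecidableEq

namespace Tm

/-- lifting a renaming under a binder -/
def liftR (f : ℕ → ℕ) : ℕ → ℕ
  | 0 => 0
  | k + 1 => f k + 1

/-- renaming of free variables -/
def rename (f : ℕ → ℕ) : Tm → Tm
  | var k => var (f k)
  | app t u => app (rename f t) (rename f u)
  | lam t => lam (rename (liftR f) t)
  | bang t => bang (rename f t)
  | der t => der (rename f t)
  | esub t u => esub (rename (liftR f) t) (rename f u)

/-- lifting a simultaneous substitution under a binder -/
def liftS (σ : ℕ → Tm) : ℕ → Tm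
  | 0 => var 0
  | k + 1 => rename (· + 1) (σ k)

/-- simultaneous (capture-avoiding) substitution -/
def subst (σ : ℕ → Tm) : Tm → Tm
  | var k => σ k
  | app t u => app (subst σ t) (subst σ u)
  | lam t => lam (subst (liftS σ) t)
  | bang t => bang (subst σ t)
  | der t => der (subst σ t)
  | esub t u => esub (subst (liftS σ) t) (subst σ u)

/-- capture-avoiding substitution of `u` for the variable `0` of `t`,
where the result is placed under `n` extra binders (and `u` already lives
at that depth). -/
def substIn (n : ℕ) (u : Tm) (t : Tm) : Tm :=
  subst (fun k => match k with
    | 0 => u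
    | k + 1 => var (k + n)) t

/-- capture-avoiding meta-level substitution `t{0 := u}` -/
def subst0 (u : Tm) (t : Tm) : Tm := substIn 0 u t

/-- plugging a term into a list context `L ::= ◻ | L[x\t]`; the head of the
list is the argument of the outermost explicit substitution. -/
def plug : List Tm → Tm → Tm
  | [], s => s
  | e :: L, s => esub (plug L s) e

/-- the w-size of a term -/
def wsize : Tm → ℕ
  | var _ => 0
  | app t u => 1 + wsize t + wsize u
  | lam t => 1 + wsize t
  | bang _ => 0
  | der t => 1 + wsize t
  | esub t u => 1 + wsize t + wsize u

end Tm

/-- the names of the three rewriting rules of the λ!-calculus -/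
inductive Rule : Type
  | dB | sb | db
  deriving DecidableEq

open Tm in
/-- the three rewriting rules, applied at the root (at a distance) -/
inductive Root : Rule → Tm → Tm → Prop
  | dB (L : List Tm) (t u : Tm) :
      Root .dB (app (plug L (lam t)) u)
               (plug L (esub t (rename (· + L.length) u)))
  | sb (L : List Tm) (t u : Tm) :
      Root .sb (esub t (plug L (bang u))) (plug L (substIn L.length u t))
  | db (L : List Tm) (t : Tm) :
      Root .db (der (plug L (bang t))) (plug L t)

/-- closure of each rule under weak contexts (no reduction under `bang`) -/
inductive Step : Rule → Tm → Tm → Prop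
  | root {r : Rule} {t t' : Tm} : Root r t t' → Step r t t'
  | appL {r t t'} (u : Tm) : Step r t t' → Step r (Tm.app t u) (Tm.app t' u)
  | appR {r u u'} (t : Tm) : Step r u u' → Step r (Tm.app t u) (Tm.app t u')
  | lam {r t t'} : Step r t t' → Step r (Tm.lam t) (Tm.lam t')
  | der {r t t'} : Step r t t' → Step r (Tm.der t) (Tm.der t')
  | esubL {r t t'} (u : Tm) : Step r t t' → Step r (Tm.esub t u) (Tm.esub t' u)
  | esubR {r u u'} (t : Tm) : Step r u u' → Step r (Tm.esub t u) (Tm.esub t u')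

/-- the weak reduction `→w` of the λ!-calculus -/
def StepW (t t' : Tm) : Prop := ∃ r, Step r t t'

/-- counted weak reduction: `RedCnt t (b, e) u` holds iff `t →w* u` using `b`
dB-steps and `e` steps of kind s!/d!. -/
inductive RedCnt : Tm → ℕ × ℕ → Tm → Prop
  | refl (t : Tm) : RedCnt t (0, 0) t
  | db {t t₁ u : Tm} {b e : ℕ} :
      Step .dB t t₁ → RedCnt t₁ (b, e) u → RedCnt t (b + 1, e) u
  | ex {t t₁ u : Tm} {b e : ℕ} :
      (Step .sb t t₁ ∨ Step .db t t₁) → RedCnt t₁ (b, e) u →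
      RedCnt t (b, e + 1) u

mutual
  /-- neutral w-normal terms -/
  inductive NeW : Tm → Prop
    | var (k : ℕ) : NeW (Tm.var k)
    | app {t u : Tm} : NaW t → NoW u → NeW (Tm.app t u)
    | der {t : Tm} : NbW t → NeW (Tm.der t)
    | esub {t u : Tm} : NeW t → NbW u → NeW (Tm.esub t u)
  /-- neutral-abs w-normal terms -/
  inductive NaW : Tm → Prop
    | bang (t : Tm) : NaW (Tm.bang t)
    | ne {t : Tm} : NeW t → NaW t
    | esub {t u : Tm} : NaW t → NbW u → NaW (Tm.esub t u)
  /-- neutral-bang w-normal terms -/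
  inductive NbW : Tm → Prop
    | ne {t : Tm} : NeW t → NbW t
    | lam {t : Tm} : NoW t → NbW (Tm.lam t)
    | esub {t u : Tm} : NbW t → NbW u → NbW (Tm.esub t u)
  /-- w-normal terms -/
  inductive NoW : Tm → Prop
    | na {t : Tm} : NaW t → NoW t
    | nb {t : Tm} : NbW t → NoW t
end

/-- clashes -/
inductive Clash : Tm → Prop
  | appBang (L : List Tm) (t u : Tm) : Clash (Tm.app (Tm.plug L (Tm.bang t)) u)
  | esubLam (L : List Tm) (t u : Tm) : Clash (Tm.esub t (Tm.plug L (Tm.lam u)))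
  | derLam (L : List Tm) (u : Tm) : Clash (Tm.der (Tm.plug L (Tm.lam u)))
  | appLam (L : List Tm) (t u : Tm) : Clash (Tm.app t (Tm.plug L (Tm.lam u)))

/-- `WSub t s` holds iff `t = W⟨s⟩` for some weak context `W` -/
inductive WSub : Tm → Tm → Prop
  | refl (t : Tm) : WSub t t
  | appL {t s : Tm} (u : Tm) : WSub t s → WSub (Tm.app t u) s
  | appR {u s : Tm} (t : Tm) : WSub u s → WSub (Tm.app t u) s
  | lam {t s : Tm} : WSub t s → WSub (Tm.lam t) s
  | der {t s : Tm} : WSub t s → WSub (Tm.der t) s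
  | esubL {t s : Tm} (u : Tm) : WSub t s → WSub (Tm.esub t u) s
  | esubR {u s : Tm} (t : Tm) : WSub u s → WSub (Tm.esub t u) s

/-- weak clash freeness -/
def Wcf (t : Tm) : Prop := ¬ ∃ s, WSub t s ∧ Clash s

mutual
  /-- neutral weak clash free normal terms -/
  inductive NeCF : Tm → Prop
    | var (k : ℕ) : NeCF (Tm.var k)
    | app {t u : Tm} : NeCF t → NaCF u → NeCF (Tm.app t u)
    | der {t : Tm} : NeCF t → NeCF (Tm.der t)
    | esub {t u : Tm} : NeCF t → NeCF u → NeCF (Tm.esub t u)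
  /-- neutral-abs weak clash free normal terms -/
  inductive NaCF : Tm → Prop
    | bang (t : Tm) : NaCF (Tm.bang t)
    | ne {t : Tm} : NeCF t → NaCF t
    | esub {t u : Tm} : NaCF t → NeCF u → NaCF (Tm.esub t u)
  /-- neutral-bang weak clash free normal terms -/
  inductive NbCF : Tm → Prop
    | ne {t : Tm} : NeCF t → NbCF t
    | lam {t : Tm} : NoCF t → NbCF (Tm.lam t)
    | esub {t u : Tm} : NbCF t → NeCF u → NbCF (Tm.esub t u)
  /-- weak clash free normal terms -/
  inductive NoCF : Tm → Prop
    | na {t : Tm} : NaCF t → NoCF t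
    | nb {t : Tm} : NbCF t → NoCF t
end

/-- Types of system 𝒰: base types, multiset types and arrow types.  A
multiset type is given by a list of types (a representative of the multiset
it determines). -/
inductive Ty : Type
  | base : ℕ → Ty
  | mult : List Ty → Ty
  | arr : List Ty → Ty → Ty

/-- typing contexts: functions from (de Bruijn) variables to multiset types -/
abbrev Ctx := ℕ → Multiset Ty

/-- the context mapping `k` to `M` and anything else to the empty multiset -/
def Ctx.single (k : ℕ) (M : Multiset Ty) : Ctx := fun j => if j = k then M else 0

/-- removing the (type of the) bound variable `0` from a context -/
def Ctx.tail (Γ : Ctx) : Ctx := fun k => Γ (k + 1)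

/-- extending a context with a multiset type for a fresh variable `0` -/
def Ctx.cons (M : Multiset Ty) (Γ : Ctx) : Ctx := fun k =>
  match k with
  | 0 => M
  | k + 1 => Γ k

/-- Sized typing of system 𝒰: `DerU Γ t τ n` means that there is a derivation
of `Γ ⊢ t : τ` whose size (number of rules, not counting `bg`) is `n`. -/
inductive DerU : Ctx → Tm → Ty → ℕ → Prop
  | ax (k : ℕ) (σ : Ty) : DerU (Ctx.single k {σ}) (Tm.var k) σ 1
  | app {Γ Δ : Ctx} {t u : Tm} {M : List Ty} {τ : Ty} {n m : ℕ} :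
      DerU Γ t (Ty.arr M τ) n → DerU Δ u (Ty.mult M) m →
      DerU (Γ + Δ) (Tm.app t u) τ (n + m + 1)
  | abs {Γ : Ctx} {t : Tm} {τ : Ty} {n : ℕ} (M : List Ty) :
      DerU Γ t τ n → Multiset.ofList M = Γ 0 →
      DerU (Ctx.tail Γ) (Tm.lam t) (Ty.arr M τ) (n + 1)
  | es {Γ Δ : Ctx} {t u : Tm} {σ : Ty} {M : List Ty} {n m : ℕ} :
      DerU Γ t σ n → DerU Δ u (Ty.mult M) m → Multiset.ofList M = Γ 0 →
      DerU (Ctx.tail Γ + Δ) (Tm.esub t u) σ (n + m + 1)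
  | bg {t : Tm} (prs : List (Ctx × Ty × ℕ)) :
      (∀ p ∈ prs, DerU p.1 t p.2.1 p.2.2) →
      DerU ((prs.map (·.1)).sum) (Tm.bang t)
           (Ty.mult (prs.map (·.2.1))) ((prs.map (·.2.2)).sum)
  | dr {Γ : Ctx} {t : Tm} {σ : Ty} {n : ℕ} :
      DerU Γ t (Ty.mult [σ]) n → DerU Γ (Tm.der t) σ (n + 1)

/-! ## The source λ-calculus with explicit substitutions (CBN / CBV) -/

/-- terms of the λ-calculus with explicit substitutions (de Bruijn) -/
inductive Lm : Type
  | var : ℕ → Lm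
  | app : Lm → Lm → Lm
  | lam : Lm → Lm
  | esub : Lm → Lm → Lm
  deriving DecidableEq

namespace Lm

def liftR (f : ℕ → ℕ) : ℕ → ℕ
  | 0 => 0
  | k + 1 => f k + 1

def rename (f : ℕ → ℕ) : Lm → Lm
  | var k => var (f k)
  | app t u => app (rename f t) (rename f u)
  | lam t => lam (rename (liftR f) t)
  | esub t u => esub (rename (liftR f) t) (rename f u)

def liftS (σ : ℕ → Lm) : ℕ → Lm
  | 0 => var 0
  | k + 1 => rename (· + 1) (σ k)

def subst (σ : ℕ → Lm) : Lm → Lm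
  | var k => σ k
  | app t u => app (subst σ t) (subst σ u)
  | lam t => lam (subst (liftS σ) t)
  | esub t u => esub (subst (liftS σ) t) (subst σ u)

def substIn (n : ℕ) (u : Lm) (t : Lm) : Lm :=
  subst (fun k => match k with
    | 0 => u
    | k + 1 => var (k + n)) t

/-- capture-avoiding meta-level substitution `t{0 := u}` -/
def subst0 (u : Lm) (t : Lm) : Lm := substIn 0 u t

def plug : List Lm → Lm → Lm
  | [], s => s
  | e :: L, s => esub (plug L s) e

/-- values -/
def IsVal : Lm → Prop
  | var _ => True
  | lam _ => True
  | _ => False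

/-- the n-size of a term -/
def nsize : Lm → ℕ
  | var _ => 0
  | lam t => 1 + nsize t
  | app t _ => 1 + nsize t
  | esub t _ => 1 + nsize t

/-- the v-size of a term -/
def vsize : Lm → ℕ
  | var _ => 0
  | lam _ => 0
  | app t u => 1 + vsize t + vsize u
  | esub t u => 1 + vsize t + vsize u

end Lm

/-- names of the CBN rules -/
inductive NRule : Type
  | dB | s
  deriving DecidableEq

/-- call-by-name reduction (closure of dB and s under CBN contexts) -/
inductive StepN : NRule → Lm → Lm → Prop
  | dB (L : List Lm) (t u : Lm) :
      StepN .dB (Lm.app (Lm.plug L (Lm.lam t)) u)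
                (Lm.plug L (Lm.esub t (Lm.rename (· + L.length) u)))
  | s (t u : Lm) : StepN .s (Lm.esub t u) (Lm.subst0 u t)
  | appL {r t t'} (u : Lm) : StepN r t t' → StepN r (Lm.app t u) (Lm.app t' u)
  | lam {r t t'} : StepN r t t' → StepN r (Lm.lam t) (Lm.lam t')
  | esubL {r t t'} (u : Lm) : StepN r t t' → StepN r (Lm.esub t u) (Lm.esub t' u)

/-- names of the CBV rules -/
inductive VRule : Type
  | dB | sv
  deriving DecidableEq

/-- call-by-value reduction (closure of dB and sv under CBV contexts) -/
inductive StepV : VRule → Lm → Lm → Prop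
  | dB (L : List Lm) (t u : Lm) :
      StepV .dB (Lm.app (Lm.plug L (Lm.lam t)) u)
                (Lm.plug L (Lm.esub t (Lm.rename (· + L.length) u)))
  | sv (L : List Lm) (t v : Lm) (hv : Lm.IsVal v) :
      StepV .sv (Lm.esub t (Lm.plug L v)) (Lm.plug L (Lm.substIn L.length v t))
  | appL {r t t'} (u : Lm) : StepV r t t' → StepV r (Lm.app t u) (Lm.app t' u)
  | appR {r u u'} (t : Lm) : StepV r u u' → StepV r (Lm.app t u) (Lm.app t u')
  | esubL {r t t'} (u : Lm) : StepV r t t' → StepV r (Lm.esub t u) (Lm.esub t' u)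
  | esubR {r u u'} (t : Lm) : StepV r u u' → StepV r (Lm.esub t u) (Lm.esub t u')

mutual
  /-- CBN neutral terms -/
  inductive NeN : Lm → Prop
    | var (k : ℕ) : NeN (Lm.var k)
    | app {t : Lm} (u : Lm) : NeN t → NeN (Lm.app t u)
  /-- CBN normal terms -/
  inductive NoN : Lm → Prop
    | lam {t : Lm} : NoN t → NoN (Lm.lam t)
    | ne {t : Lm} : NeN t → NoN t
end

mutual
  /-- CBV (substituted) variables -/
  inductive VrV : Lm → Prop
    | var (k : ℕ) : VrV (Lm.var k)
    | esub {t u : Lm} : VrV t → NeV u → VrV (Lm.esub t u)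
  /-- CBV neutral terms -/
  inductive NeV : Lm → Prop
    | app₁ {t u : Lm} : VrV t → NoV u → NeV (Lm.app t u)
    | app₂ {t u : Lm} : NeV t → NoV u → NeV (Lm.app t u)
    | esub {t u : Lm} : NeV t → NeV u → NeV (Lm.esub t u)
  /-- CBV normal terms -/
  inductive NoV : Lm → Prop
    | lam (t : Lm) : NoV (Lm.lam t)
    | vr {t : Lm} : VrV t → NoV t
    | ne {t : Lm} : NeV t → NoV t
    | esub {t u : Lm} : NoV t → NeV u → NoV (Lm.esub t u)
end

/-- counted CBN reduction, recording the number of dB- and s-steps -/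
inductive RedCntN : Lm → ℕ × ℕ → Lm → Prop
  | refl (t : Lm) : RedCntN t (0, 0) t
  | db {t t₁ u : Lm} {b e : ℕ} :
      StepN .dB t t₁ → RedCntN t₁ (b, e) u → RedCntN t (b + 1, e) u
  | s {t t₁ u : Lm} {b e : ℕ} :
      StepN .s t t₁ → RedCntN t₁ (b, e) u → RedCntN t (b, e + 1) u

/-- counted CBV reduction, recording the number of dB- and sv-steps -/
inductive RedCntV : Lm → ℕ × ℕ → Lm → Prop
  | refl (t : Lm) : RedCntV t (0, 0) t
  | db {t t₁ u : Lm} {b e : ℕ} :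
      StepV .dB t t₁ → RedCntV t₁ (b, e) u → RedCntV t (b + 1, e) u
  | sv {t t₁ u : Lm} {b e : ℕ} :
      StepV .sv t t₁ → RedCntV t₁ (b, e) u → RedCntV t (b, e + 1) u

/-- the CBN embedding into the λ!-calculus -/
def cbn : Lm → Tm
  | .var k => .var k
  | .lam t => .lam (cbn t)
  | .app t u => .app (cbn t) (.bang (cbn u))
  | .esub t u => .esub (cbn t) (.bang (cbn u))

/-- `deBang t = some s'` iff `t = L⟨!s⟩` and `s' = L⟨s⟩` -/
def deBang : Tm → Option Tm
  | .bang s => some s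
  | .esub t e => (deBang t).map (fun s => Tm.esub s e)
  | _ => none

/-- the CBV embedding into the λ!-calculus -/
def cbv : Lm → Tm
  | .var k => .bang (.var k)
  | .lam t => .bang (.lam (cbv t))
  | .app t u =>
      match deBang (cbv t) with
      | some r => Tm.app r (cbv u)
      | none => Tm.app (.der (cbv t)) (cbv u)
  | .esub t u => .esub (cbv t) (cbv u)

/-- Sized typing of system 𝒩 (call-by-name): `DerN Γ t τ n` means that there
is a derivation of `Γ ⊢ t : τ` of size `n` (counting all rules). -/
inductive DerN : Ctx → Lm → Ty → ℕ → Prop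
  | ax (k : ℕ) (σ : Ty) : DerN (Ctx.single k {σ}) (Lm.var k) σ 1
  | app {Γ : Ctx} {t u : Lm} {τ : Ty} {n : ℕ} (prs : List (Ctx × Ty × ℕ)) :
      DerN Γ t (Ty.arr (prs.map (·.2.1)) τ) n →
      (∀ p ∈ prs, DerN p.1 u p.2.1 p.2.2) →
      DerN (Γ + (prs.map (·.1)).sum) (Lm.app t u) τ
           (n + (prs.map (·.2.2)).sum + 1)
  | abs {Γ : Ctx} {t : Lm} {τ : Ty} {n : ℕ} (M : List Ty) :
      DerN Γ t τ n → Multiset.ofList M = Γ 0 →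
      DerN (Ctx.tail Γ) (Lm.lam t) (Ty.arr M τ) (n + 1)
  | es {Γ : Ctx} {t u : Lm} {τ : Ty} {n : ℕ} (prs : List (Ctx × Ty × ℕ)) :
      DerN Γ t τ n →
      Multiset.ofList (prs.map (·.2.1)) = Γ 0 →
      (∀ p ∈ prs, DerN p.1 u p.2.1 p.2.2) →
      DerN (Ctx.tail Γ + (prs.map (·.1)).sum) (Lm.esub t u) τ
           (n + (prs.map (·.2.2)).sum + 1)

/-- Sized typing of system 𝒱 (call-by-value): `DerV Γ t τ n` means that there
is a derivation of `Γ ⊢ t : τ` of size `n` (each rule counts 1, except that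
`ax` counts the cardinal of its multiset and `abs` contributes the sizes of
its premises plus the number of premises). -/
inductive DerV : Ctx → Lm → Ty → ℕ → Prop
  | ax (k : ℕ) (M : List Ty) :
      DerV (Ctx.single k (Multiset.ofList M)) (Lm.var k) (Ty.mult M) M.length
  | es {Γ Δ : Ctx} {t u : Lm} {σ : Ty} {M : List Ty} {n m : ℕ} :
      DerV Γ t σ n → DerV Δ u (Ty.mult M) m → Multiset.ofList M = Γ 0 →
      DerV (Ctx.tail Γ + Δ) (Lm.esub t u) σ (n + m + 1)
  | abs {t : Lm} (prs : List (Ctx × List Ty × Ty × ℕ)) :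
      (∀ p ∈ prs, DerV p.1 t p.2.2.1 p.2.2.2) →
      (∀ p ∈ prs, Multiset.ofList p.2.1 = p.1 0) →
      DerV ((prs.map (fun p => Ctx.tail p.1)).sum) (Lm.lam t)
           (Ty.mult (prs.map (fun p => Ty.arr p.2.1 p.2.2.1)))
           ((prs.map (·.2.2.2)).sum + prs.length)
  | app {Γ Δ : Ctx} {t u : Lm} {M : List Ty} {τ : Ty} {n m : ℕ} :
      DerV Γ t (Ty.mult [Ty.arr M τ]) n → DerV Δ u (Ty.mult M) m →
      DerV (Γ + Δ) (Lm.app t u) τ (n + m + 1)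

section NFAux

open Lm

/-- A CBN neutral term is never of the shape `L⟨λx.s⟩`. -/
lemma neN_not_plug_lam (L : List Lm) (s t : Lm) (hne : NeN t) :
    t ≠ Lm.plug L (Lm.lam s) := by
  intro h
  cases L with
  | nil => subst h; cases hne
  | cons e L => subst h; cases hne

/-- A CBV neutral term is never of the shape `L⟨v⟩` with `v` a value. -/
lemma neV_not_plug : ∀ (L : List Lm) (v t : Lm), Lm.IsVal v → NeV t →
    t ≠ Lm.plug L v := by
  intro L
  induction L with
  | nil =>
    intro v t hv hne h
    subst h
    cases hne <;> simp [Lm.IsVal] at hv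
  | cons e L ih =>
    intro v t hv hne h
    subst h
    cases hne with
    | esub h1 h2 => exact ih v _ hv h1 rfl

/-- A CBV variable chain is never of the shape `L⟨λx.s⟩`. -/
lemma vrV_not_plug_lam : ∀ (L : List Lm) (s t : Lm), VrV t →
    t ≠ Lm.plug L (Lm.lam s) := by
  intro L
  induction L with
  | nil => intro s t hv h; subst h; cases hv
  | cons e L ih =>
    intro s t hv h
    subst h
    cases hv with
    | esub h1 h2 => exact ih s _ h1 rfl

/-- A CBV variable chain is of the shape `L⟨v⟩` with `v` a value. -/
lemma vrV_plug : ∀ t : Lm, VrV t → ∃ L v, Lm.IsVal v ∧ t = Lm.plug L v := by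
  intro t
  induction t with
  | var k => intro _; exact ⟨[], Lm.var k, trivial, rfl⟩
  | app a b iha ihb => intro hv; cases hv
  | lam a iha => intro hv; cases hv
  | esub a b iha ihb =>
    intro hv
    cases hv with
    | esub h1 h2 =>
      obtain ⟨L, v, hval, hEq⟩ := iha h1
      exact ⟨b :: L, v, hval, by simp [Lm.plug, hEq]⟩

/-- classification of CBV normal terms -/
lemma noV_cases : ∀ t : Lm, NoV t →
    (∃ L s, t = Lm.plug L (Lm.lam s)) ∨ VrV t ∨ NeV t := by
  intro t
  induction t with
  | var k => intro _; exact Or.inr (Or.inl (VrV.var k))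
  | app a b iha ihb =>
    intro hno
    cases hno with
    | vr hv => cases hv
    | ne hn => exact Or.inr (Or.inr hn)
  | lam a iha => intro _; exact Or.inl ⟨[], a, rfl⟩
  | esub a b iha ihb =>
    intro hno
    cases hno with
    | vr hv => exact Or.inr (Or.inl hv)
    | ne hn => exact Or.inr (Or.inr hn)
    | esub h1 h2 =>
      rcases iha h1 with ⟨L, s, hEq⟩ | hv | hn
      · exact Or.inl ⟨b :: L, s, by simp [Lm.plug, hEq]⟩
      · exact Or.inr (Or.inl (VrV.esub hv h2))
      · exact Or.inr (Or.inr (NeV.esub hn h2))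

/-- A normal CBV term which is not of the shape `L⟨v⟩` is neutral. -/
lemma noV_ne : ∀ t : Lm, NoV t →
    (∀ L v, Lm.IsVal v → t ≠ Lm.plug L v) → NeV t := by
  intro t
  induction t with
  | var k => intro _ h; exact absurd rfl (h [] (Lm.var k) trivial)
  | app a b iha ihb =>
    intro hno _
    cases hno with
    | vr hv => cases hv
    | ne hn => exact hn
  | lam a iha => intro _ h; exact absurd rfl (h [] (Lm.lam a) trivial)
  | esub a b iha ihb =>
    intro hno h
    cases hno with
    | vr hv =>
      obtain ⟨L, v, hval, hEq⟩ := vrV_plug _ hv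
      exact absurd hEq (h L v hval)
    | ne hn => exact hn
    | esub h1 h2 =>
      refine NeV.esub (iha h1 ?_) h2
      intro L v hval hEq
      exact h (b :: L) v hval (by simp [Lm.plug, hEq])

/-- CBN normal (and neutral) terms have no CBN redex. -/
lemma noN_no_step : ∀ t : Lm,
    (NeN t → ∀ (u : Lm) (r : NRule), ¬ StepN r t u) ∧
    (NoN t → ∀ (u : Lm) (r : NRule), ¬ StepN r t u) := by
  intro t
  induction t with
  | var k =>
    exact ⟨(fun _ u r hs => by cases hs), (fun _ u r hs => by cases hs)⟩
  | app a b iha ihb =>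
    have key : NeN (Lm.app a b) → ∀ (u : Lm) (r : NRule), ¬ StepN r (Lm.app a b) u := by
      intro hne u r hs
      cases hne with
      | app _ hna =>
        cases hs with
        | dB L t u => exact neN_not_plug_lam L t _ hna rfl
        | appL u hs' => exact iha.1 hna _ _ hs'
    refine ⟨key, fun hno u r hs => ?_⟩
    cases hno with
    | ne hn => exact key hn u r hs
  | lam a iha =>
    have : ∀ (u : Lm) (r : NRule), NoN a → ¬ StepN r (Lm.lam a) u := by
      intro u r hna hs
      cases hs with
      | lam hs' => exact iha.2 hna _ _ hs'
    refine ⟨(fun hne => by cases hne), fun hno u r hs => ?_⟩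
    cases hno with
    | lam h => exact this u r h hs
    | ne hn => cases hn
  | esub a b iha ihb =>
    refine ⟨(fun hne => by cases hne), fun hno => ?_⟩
    cases hno with
    | ne hn => cases hn

/-- CBV variable chains, neutral and normal terms have no CBV redex. -/
lemma noV_no_step : ∀ t : Lm,
    (VrV t → ∀ (u : Lm) (r : VRule), ¬ StepV r t u) ∧
    (NeV t → ∀ (u : Lm) (r : VRule), ¬ StepV r t u) ∧
    (NoV t → ∀ (u : Lm) (r : VRule), ¬ StepV r t u) := by
  intro t
  induction t with
  | var k =>
    exact ⟨(fun _ u r hs => by cases hs), (fun _ u r hs => by cases hs),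
      (fun _ u r hs => by cases hs)⟩
  | lam a iha =>
    exact ⟨(fun _ u r hs => by cases hs), (fun _ u r hs => by cases hs),
      (fun _ u r hs => by cases hs)⟩
  | app a b iha ihb =>
    have key : NeV (Lm.app a b) → ∀ (u : Lm) (r : VRule), ¬ StepV r (Lm.app a b) u := by
      intro hne u r hs
      cases hne with
      | app₁ h1 h2 =>
        cases hs with
        | dB L t u => exact vrV_not_plug_lam L t _ h1 rfl
        | appL u hs' => exact iha.1 h1 _ _ hs'
        | appR t hs' => exact ihb.2.2 h2 _ _ hs'
      | app₂ h1 h2 =>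
        cases hs with
        | dB L t u => exact neV_not_plug L (Lm.lam t) _ trivial h1 rfl
        | appL u hs' => exact iha.2.1 h1 _ _ hs'
        | appR t hs' => exact ihb.2.2 h2 _ _ hs'
    refine ⟨(fun hv => by cases hv), key, fun hno u r hs => ?_⟩
    cases hno with
    | vr hv => cases hv
    | ne hn => exact key hn u r hs
  | esub a b iha ihb =>
    have keyv : VrV (Lm.esub a b) → ∀ (u : Lm) (r : VRule), ¬ StepV r (Lm.esub a b) u := by
      intro hv u r hs
      cases hv with
      | esub h1 h2 =>
        cases hs with
        | sv L t v hval => exact neV_not_plug L v _ hval h2 rfl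
        | esubL u hs' => exact iha.1 h1 _ _ hs'
        | esubR t hs' => exact ihb.2.1 h2 _ _ hs'
    have keyn : NeV (Lm.esub a b) → ∀ (u : Lm) (r : VRule), ¬ StepV r (Lm.esub a b) u := by
      intro hn u r hs
      cases hn with
      | esub h1 h2 =>
        cases hs with
        | sv L t v hval => exact neV_not_plug L v _ hval h2 rfl
        | esubL u hs' => exact iha.2.1 h1 _ _ hs'
        | esubR t hs' => exact ihb.2.1 h2 _ _ hs'
    refine ⟨keyv, keyn, fun hno u r hs => ?_⟩
    cases hno with
    | vr hv => exact keyv hv u r hs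
    | ne hn => exact keyn hn u r hs
    | esub h1 h2 =>
      cases hs with
      | sv L t v hval => exact neV_not_plug L v _ hval h2 rfl
      | esubL u hs' => exact iha.2.2 h1 _ _ hs'
      | esubR t hs' => exact ihb.2.1 h2 _ _ hs'

/-- CBN terms with no redex are normal. -/
lemma no_step_noN : ∀ t : Lm, (∀ (u : Lm) (r : NRule), ¬ StepN r t u) → NoN t := by
  intro t
  induction t with
  | var k => intro _; exact NoN.ne (NeN.var k)
  | lam a iha =>
    intro h
    refine NoN.lam (iha fun u r hs => ?_)
    exact h _ r (StepN.lam hs)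
  | app a b iha ihb =>
    intro h
    have hna : NoN a := iha fun u r hs => h _ r (StepN.appL b hs)
    cases hna with
    | lam hn => exact absurd (StepN.dB [] _ b) (h _ .dB)
    | ne hn => exact NoN.ne (NeN.app b hn)
  | esub a b iha ihb =>
    intro h
    exact absurd (StepN.s a b) (h _ .s)

/-- CBV terms with no redex are normal. -/
lemma no_step_noV : ∀ t : Lm, (∀ (u : Lm) (r : VRule), ¬ StepV r t u) → NoV t := by
  intro t
  induction t with
  | var k => intro _; exact NoV.vr (VrV.var k)
  | lam a iha => intro _; exact NoV.lam a
  | app a b iha ihb =>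
    intro h
    have hna : NoV a := iha fun u r hs => h _ r (StepV.appL b hs)
    have hnb : NoV b := ihb fun u r hs => h _ r (StepV.appR a hs)
    rcases noV_cases a hna with ⟨L, s, hEq⟩ | hv | hn
    · subst hEq; exact absurd (StepV.dB L s b) (h _ .dB)
    · exact NoV.ne (NeV.app₁ hv hnb)
    · exact NoV.ne (NeV.app₂ hn hnb)
  | esub a b iha ihb =>
    intro h
    have hna : NoV a := iha fun u r hs => h _ r (StepV.esubL b hs)
    have hnb : NoV b := ihb fun u r hs => h _ r (StepV.esubR a hs)
    refine NoV.esub hna (noV_ne b hnb ?_)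
    intro L v hval hEq
    subst hEq
    exact h _ .sv (StepV.sv L a v hval)

end NFAux

/-- **Characterisation of CBN and CBV normal forms** (Lemma 10):
`t ∈ no_n` iff no CBN step applies to `t`, and `t ∈ no_v` iff no CBV step
applies to `t`. -/
theorem cbn_cbv_normal_forms (t : Lm) :
    (NoN t ↔ ∀ (u : Lm) (r : NRule), ¬ StepN r t u) ∧
    (NoV t ↔ ∀ (u : Lm) (r : VRule), ¬ StepV r t u) := by
  exact ⟨⟨(noN_no_step t).2, no_step_noN t⟩,
    ⟨(noV_no_step t).2.2, no_step_noV t⟩⟩
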